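/- Let n ≥ 2 and m ≥ n be integers, and for 1 ≤ i ≤ n let A_i = D_n^m + w_i, where w_1 = (0,0) and w_i = w_{i-1} + (2^{n-i+1}·m/2 + 1, −1 + ∑_{j=1}^{2^{n-i+1}/2} s_j) for 2 ≤ i ≤ n, i.e., w_i − w_{i-1} = (2^{n-i}m + 1, (∑_{j=1}^{2^{n-i}} s_j) − 1). Then for every pair 1 ≤ i < j ≤ n, the interiors of A_i and A_j are disjoint. -/

import Mathlib

/-- The ruler sequence: `s i = v₂(i) + 1`. -/
def rulerSeq (i : ℕ) : ℕ := padicValNat 2 i + 1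

/-- `yCoord i = y_i = ∑_{j=1}^{i-1} s j`. -/
def yCoord (i : ℕ) : ℕ := ∑ j ∈ Finset.Ico 1 i, rulerSeq j

/-- The `i`-th bar of `D_n^m`: `[(i-1)m, im] × [y_i, y_i + 1]`. -/
def bar (m i : ℕ) : Set (ℝ × ℝ) :=
  Set.Icc (((i : ℝ) - 1) * m) ((i : ℝ) * m) ×ˢ Set.Icc ((yCoord i : ℝ)) ((yCoord i : ℝ) + 1)

/-- The `i`-th connector of `D_n^m`: `[im - 1, im] × [y_i + 1, y_{i+1} + 1]`. -/
def connector (m i : ℕ) : Set (ℝ × ℝ) :=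
  Set.Icc ((i : ℝ) * m - 1) ((i : ℝ) * m) ×ˢ
    Set.Icc ((yCoord i : ℝ) + 1) ((yCoord (i + 1) : ℝ) + 1)

/-- The region `D_n^m`: union of `2^n` bars and `2^n - 1` connectors. -/
def Dregion (n m : ℕ) : Set (ℝ × ℝ) :=
  (⋃ i ∈ Finset.Icc 1 (2 ^ n), bar m i) ∪ ⋃ i ∈ Finset.Icc 1 (2 ^ n - 1), connector m i

/-!
Put `b = j - i` and `a = 2^(n-j) (2^b - 1)`. Telescoping the recursion gives
`w j - w i = (a m + b, 2a - 2b)`. The bars and connectors of `D_n^m` are closed boxes, and the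
interiors of two finite unions of closed sets can only meet if the interiors of two of the pieces
meet, so it suffices to separate every piece of `D_n^m` from every piece of its translate.
As `0 < b < m`, the translate of the piece with index `l` can only overlap horizontally a piece
with index `k ≥ l + a`, and that piece lies higher: `y_k - y_l ≥ a + v₂(a!) = 2a - b`, because
the product of `a` consecutive integers is divisible by `a!` and, by Legendre's formula,
`v₂(a!) = a - b` (the binary digits of `a` are `b` ones followed by `n - j` zeros).
-/

open scoped Nat
open Set

section Topology

variable {X : Type*} [TopologicalSpace X]

lemma disjoint_interior_union_left {A B U : Set X} (hA : IsClosed A) (hU : IsOpen U)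
    (hAU : Disjoint (interior A) U) (hBU : Disjoint (interior B) U) :
    Disjoint (interior (A ∪ B)) U := by
  set V := interior (A ∪ B) ∩ U
  have hV : IsOpen V := isOpen_interior.inter hU
  have hVA : V \ A ⊆ interior B :=
    interior_maximal (fun x hx => (interior_subset hx.1.1).resolve_left hx.2) (hV.sdiff hA)
  have hVA_interior : V ⊆ interior A := interior_maximal (fun x hx => by_contra fun hxA =>
    disjoint_left.1 hBU (hVA ⟨hx, hxA⟩) hx.2) hV
  exact disjoint_left.2 fun x hx hxU => disjoint_left.1 hAU (hVA_interior ⟨hx, hxU⟩) hxU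

lemma disjoint_interior_biUnion_left {ι : Type*} {s : Finset ι} {A : ι → Set X} {U : Set X}
    (hU : IsOpen U) (hA : ∀ i ∈ s, IsClosed (A i)) (h : ∀ i ∈ s, Disjoint (interior (A i)) U) :
    Disjoint (interior (⋃ i ∈ s, A i)) U := by
  classical
  induction s using Finset.induction_on with
  | empty => simp
  | insert i s _ ih =>
    rw [Finset.set_biUnion_insert]
    exact disjoint_interior_union_left (hA i (Finset.mem_insert_self i s)) hU
      (h i (Finset.mem_insert_self i s))
      (ih (fun j hj => hA j (Finset.mem_insert_of_mem hj))
        fun j hj => h j (Finset.mem_insert_of_mem hj))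

end Topology

lemma image_add_Icc_prod_Icc (v : ℝ × ℝ) (a b c d : ℝ) :
    (· + v) '' (Icc a b ×ˢ Icc c d) = Icc (a + v.1) (b + v.1) ×ˢ Icc (c + v.2) (d + v.2) := by
  rw [← image_add_const_Icc, ← image_add_const_Icc, ← prodMap_image_prod]
  rfl

lemma disjoint_interior_Icc_prod_Icc {a₁ b₁ c₁ d₁ a₂ b₂ c₂ d₂ : ℝ}
    (h : (b₁ ≤ a₂ ∨ b₂ ≤ a₁) ∨ (d₁ ≤ c₂ ∨ d₂ ≤ c₁)) :
    Disjoint (interior (Icc a₁ b₁ ×ˢ Icc c₁ d₁)) (interior (Icc a₂ b₂ ×ˢ Icc c₂ d₂)) := by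
  simp only [interior_prod_eq, interior_Icc, disjoint_prod, Ioo_disjoint_Ioo]
  rcases h with (h | h) | (h | h)
  · exact .inl (min_le_of_left_le (le_max_of_le_right h))
  · exact .inl (min_le_of_right_le (le_max_of_le_left h))
  · exact .inr (min_le_of_left_le (le_max_of_le_right h))
  · exact .inr (min_le_of_right_le (le_max_of_le_left h))

lemma isClosed_bar (m k : ℕ) : IsClosed (bar m k) := isClosed_Icc.prod isClosed_Icc

lemma isClosed_connector (m k : ℕ) : IsClosed (connector m k) := isClosed_Icc.prod isClosed_Icc

lemma disjoint_interior_image_Dregion_left (n m : ℕ) {f : ℝ × ℝ → ℝ × ℝ} (hf : IsClosedMap f)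
    {U : Set (ℝ × ℝ)} (hU : IsOpen U)
    (hbar : ∀ k, 1 ≤ k → Disjoint (interior (f '' bar m k)) U)
    (hconnector : ∀ k, 1 ≤ k → Disjoint (interior (f '' connector m k)) U) :
    Disjoint (interior (f '' Dregion n m)) U := by
  rw [Dregion, image_union, image_iUnion₂, image_iUnion₂]
  exact disjoint_interior_union_left
    (isClosed_biUnion_finset fun k _ => hf _ (isClosed_bar m k)) hU
    (disjoint_interior_biUnion_left hU (fun k _ => hf _ (isClosed_bar m k))
      fun k hk => hbar k (Finset.mem_Icc.1 hk).1)
    (disjoint_interior_biUnion_left hU (fun k _ => hf _ (isClosed_connector m k))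
      fun k hk => hconnector k (Finset.mem_Icc.1 hk).1)

lemma yCoord_succ (N : ℕ) : yCoord (N + 1) = N + padicValNat 2 N ! := by
  induction N with
  | zero => simp [yCoord]
  | succ N ih =>
    rw [yCoord, Finset.sum_Ico_succ_top (by omega), ← yCoord, ih, rulerSeq, Nat.factorial_succ,
      padicValNat.mul N.succ_ne_zero N.factorial_ne_zero]
    ring

lemma yCoord_mono : Monotone yCoord := fun _ _ h =>
  Finset.sum_le_sum_of_subset (Finset.Ico_subset_Ico_right h)

lemma padicValNat_two_factorial_two_pow_mul (r b : ℕ) :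
    padicValNat 2 (2 ^ r * (2 ^ b - 1))! + b = 2 ^ r * (2 ^ b - 1) := by
  induction r with
  | zero =>
    rw [pow_zero, one_mul]
    induction b with
    | zero => simp
    | succ b ih =>
      have h : 2 ^ (b + 1) - 1 = 2 * (2 ^ b - 1) + 1 := by
        have := Nat.one_le_two_pow (n := b); rw [pow_succ]; omega
      rw [h, padicValNat_factorial_mul_add _ one_lt_two, padicValNat_factorial_mul]
      omega
  | succ r ih =>
    rw [pow_succ, mul_comm _ 2, mul_assoc, padicValNat_factorial_mul]
    omega

lemma padicValNat_two_factorial_add (N a : ℕ) :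
    padicValNat 2 N ! + padicValNat 2 a ! ≤ padicValNat 2 (N + a)! := by
  rw [← padicValNat.mul N.factorial_ne_zero a.factorial_ne_zero]
  exact (padicValNat_dvd_iff_le (N + a).factorial_ne_zero).mp
    ((pow_padicValNat_dvd).trans (Nat.factorial_mul_factorial_dvd_factorial_add N a))

lemma le_yCoord_add {l : ℕ} (hl : 1 ≤ l) (a : ℕ) :
    yCoord l + a + padicValNat 2 a ! ≤ yCoord (l + a) := by
  obtain ⟨N, rfl⟩ := Nat.exists_eq_add_of_le' hl
  rw [add_right_comm N, yCoord_succ, yCoord_succ]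
  have := padicValNat_two_factorial_add N a
  omega

lemma yCoord_add_two_mul_le {r b l k : ℕ} (hl : 1 ≤ l) (hk : l + 2 ^ r * (2 ^ b - 1) ≤ k) :
    yCoord l + 2 * (2 ^ r * (2 ^ b - 1)) ≤ yCoord k + b := by
  have := le_yCoord_add hl (2 ^ r * (2 ^ b - 1))
  have := yCoord_mono hk
  have := padicValNat_two_factorial_two_pow_mul r b
  omega

lemma sum_rulerSeq_Icc_two_pow (r : ℕ) :
    ∑ j ∈ Finset.Icc 1 (2 ^ r), rulerSeq j + 1 = 2 ^ (r + 1) := by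
  have h := padicValNat_two_factorial_two_pow_mul r 1
  rw [pow_one, Nat.add_one_sub_one, mul_one] at h
  rw [← Finset.Ico_add_one_right_eq_Icc, ← yCoord, yCoord_succ, pow_succ]
  omega

def shiftVec (m a b : ℕ) : ℝ × ℝ := ((a : ℝ) * m + b, 2 * (a : ℝ) - 2 * b)

lemma eq_add_shiftVec_of_steps {n m : ℕ} {w : ℕ → ℝ × ℝ}
    (hw : ∀ i, 2 ≤ i → i ≤ n →
      w i = w (i - 1) +
        ((2 : ℝ) ^ (n - i) * m + 1,
          (∑ j ∈ Finset.Icc 1 (2 ^ (n - i)), (rulerSeq j : ℝ)) - 1))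
    {i : ℕ} (hi : 1 ≤ i) {b : ℕ} (hb : i + b ≤ n) :
    w (i + b) = w i + shiftVec m (2 ^ (n - (i + b)) * (2 ^ b - 1)) b := by
  induction b with
  | zero => simp [shiftVec]
  | succ b ih =>
    obtain ⟨r, hr⟩ : ∃ r, n - (i + b) = r + 1 := ⟨n - (i + (b + 1)), by omega⟩
    have hsum : ∑ j ∈ Finset.Icc 1 (2 ^ r), (rulerSeq j : ℝ) = 2 ^ (r + 1) - 1 := by
      rw [eq_sub_iff_add_eq]; exact_mod_cast sum_rulerSeq_Icc_two_pow r
    rw [← add_assoc] at hb ⊢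
    rw [hw _ (by omega) hb, Nat.add_sub_cancel, ih (by omega), hr,
      show n - (i + b + 1) = r by omega, hsum, add_assoc]
    congr 1
    simp only [shiftVec, Prod.mk_add_mk, Nat.cast_mul, Nat.cast_pow,
      Nat.cast_sub Nat.one_le_two_pow, Nat.cast_ofNat, Nat.cast_one, Nat.cast_add]
    ext <;> ring

section Pieces

variable {m a b k l : ℕ}

lemma disjoint_interior_bar_shift_bar (hb : 1 ≤ b) (hl : 1 ≤ l)
    (hy : ∀ l k, 1 ≤ l → l + a ≤ k → yCoord l + 2 * a ≤ yCoord k + b) :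
    Disjoint (interior (bar m k)) (interior ((· + shiftVec m a b) '' bar m l)) := by
  rw [bar, bar, image_add_Icc_prod_Icc]
  apply disjoint_interior_Icc_prod_Icc
  simp only [shiftVec]
  rcases lt_or_ge k (l + a) with h | h
  · have : ((k : ℝ) + 1) * m ≤ (l + a) * m := by exact_mod_cast Nat.mul_le_mul_right m h
    left; left; nlinarith
  · have : (yCoord l : ℝ) + 2 * a ≤ yCoord k + b := by exact_mod_cast hy l k hl h
    have : (1 : ℝ) ≤ b := by exact_mod_cast hb
    right; right; linarith

lemma disjoint_interior_bar_shift_connector (hb : 1 ≤ b)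
    (hy : ∀ l k, 1 ≤ l → l + a ≤ k → yCoord l + 2 * a ≤ yCoord k + b) :
    Disjoint (interior (bar m k)) (interior ((· + shiftVec m a b) '' connector m l)) := by
  rw [bar, connector, image_add_Icc_prod_Icc]
  apply disjoint_interior_Icc_prod_Icc
  simp only [shiftVec]
  have : (1 : ℝ) ≤ b := by exact_mod_cast hb
  rcases le_or_gt k (l + a) with h | h
  · have : (k : ℝ) * m ≤ (l + a) * m := by exact_mod_cast Nat.mul_le_mul_right m h
    left; left; nlinarith
  · have : (yCoord (l + 1) : ℝ) + 2 * a ≤ yCoord k + b := by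
      exact_mod_cast hy (l + 1) k (by omega) (by omega)
    right; right; linarith

lemma disjoint_interior_connector_shift_bar (hb : 1 ≤ b) (hl : 1 ≤ l)
    (hy : ∀ l k, 1 ≤ l → l + a ≤ k → yCoord l + 2 * a ≤ yCoord k + b) :
    Disjoint (interior (connector m k)) (interior ((· + shiftVec m a b) '' bar m l)) := by
  rw [bar, connector, image_add_Icc_prod_Icc]
  apply disjoint_interior_Icc_prod_Icc
  simp only [shiftVec]
  rcases lt_or_ge k (l + a) with h | h
  · have : ((k : ℝ) + 1) * m ≤ (l + a) * m := by exact_mod_cast Nat.mul_le_mul_right m h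
    left; left; nlinarith
  · have : (yCoord l : ℝ) + 2 * a ≤ yCoord k + b := by exact_mod_cast hy l k hl h
    have : (1 : ℝ) ≤ b := by exact_mod_cast hb
    right; right; linarith

lemma disjoint_interior_connector_shift_connector (hb : 1 ≤ b) (hbm : b < m) :
    Disjoint (interior (connector m k)) (interior ((· + shiftVec m a b) '' connector m l)) := by
  rw [connector, connector, image_add_Icc_prod_Icc]
  apply disjoint_interior_Icc_prod_Icc
  simp only [shiftVec]
  have : (1 : ℝ) ≤ b := by exact_mod_cast hb
  have : (b : ℝ) + 1 ≤ m := by exact_mod_cast hbm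
  rcases le_or_gt k (l + a) with h | h
  · have : (k : ℝ) * m ≤ (l + a) * m := by exact_mod_cast Nat.mul_le_mul_right m h
    left; left; nlinarith
  · have : ((l : ℝ) + a + 1) * m ≤ k * m := by exact_mod_cast Nat.mul_le_mul_right m h
    left; right; nlinarith

end Pieces

theorem disjoint_interior_Dregion_shiftVec (n m a b : ℕ) (hb : 1 ≤ b) (hbm : b < m)
    (hy : ∀ l k, 1 ≤ l → l + a ≤ k → yCoord l + 2 * a ≤ yCoord k + b) :
    Disjoint (interior (Dregion n m)) (interior ((· + shiftVec m a b) '' Dregion n m)) := by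
  have hbar (k : ℕ) : Disjoint (interior (bar m k))
      (interior ((· + shiftVec m a b) '' Dregion n m)) :=
    (disjoint_interior_image_Dregion_left n m (isClosedMap_add_right _) isOpen_interior
      (fun _ hl => (disjoint_interior_bar_shift_bar hb hl hy).symm)
      fun _ _ => (disjoint_interior_bar_shift_connector hb hy).symm).symm
  have hconnector (k : ℕ) : Disjoint (interior (connector m k))
      (interior ((· + shiftVec m a b) '' Dregion n m)) :=
    (disjoint_interior_image_Dregion_left n m (isClosedMap_add_right _) isOpen_interior
      (fun _ hl => (disjoint_interior_connector_shift_bar hb hl hy).symm)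
      fun _ _ => (disjoint_interior_connector_shift_connector hb hbm).symm).symm
  simpa only [image_id] using disjoint_interior_image_Dregion_left n m IsClosedMap.id
    isOpen_interior (by simpa only [image_id] using fun k _ => hbar k)
    (by simpa only [image_id] using fun k _ => hconnector k)

theorem construction_translates_disjoint_general (n m : ℕ) (hm : n ≤ m)
    (w : ℕ → ℝ × ℝ)
    (hw : ∀ i, 2 ≤ i → i ≤ n →
      w i = w (i - 1) +
        ((2 : ℝ) ^ (n - i) * m + 1,
          (∑ j ∈ Finset.Icc 1 (2 ^ (n - i)), (rulerSeq j : ℝ)) - 1)) :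
    ∀ i j : ℕ, 1 ≤ i → i < j → j ≤ n →
      Disjoint (interior ((· + w i) '' Dregion n m))
        (interior ((· + w j) '' Dregion n m)) := by
  intro i j hi hij hjn
  obtain ⟨b, rfl⟩ := Nat.exists_eq_add_of_le hij.le
  set v := shiftVec m (2 ^ (n - (i + b)) * (2 ^ b - 1)) b
  have hD : Disjoint (interior (Dregion n m)) (interior ((· + v) '' Dregion n m)) :=
    disjoint_interior_Dregion_shiftVec n m _ _ (by omega) (by omega)
      fun _ _ hl hk => yCoord_add_two_mul_le hl hk
  have hwj : (· + w (i + b)) = (· + w i) ∘ (· + v) := by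
    funext x
    rw [Function.comp_apply, eq_add_shiftVec_of_steps hw hi hjn, add_comm (w i), add_assoc]
  have hinterior (s : Set (ℝ × ℝ)) : interior ((· + w i) '' s) = (· + w i) '' interior s :=
    ((Homeomorph.addRight (w i)).image_interior s).symm
  rw [hwj, image_comp, hinterior, hinterior, disjoint_image_iff (add_left_injective (w i))]
  exact hD

theorem construction_translates_disjoint (n m : ℕ) (hn : 2 ≤ n) (hm : n ≤ m)
    (w : ℕ → ℝ × ℝ) (hw1 : w 1 = 0)
    (hw : ∀ i, 2 ≤ i → i ≤ n →
      w i = w (i - 1) +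
        ((2 : ℝ) ^ (n - i) * m + 1,
          (∑ j ∈ Finset.Icc 1 (2 ^ (n - i)), (rulerSeq j : ℝ)) - 1)) :
    ∀ i j : ℕ, 1 ≤ i → i < j → j ≤ n →
      Disjoint (interior ((· + w i) '' Dregion n m))
        (interior ((· + w j) '' Dregion n m)) :=
  construction_translates_disjoint_general n m hm w hw
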